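/- Let r ≥ 1 be an integer and let (α;β) = (α₁,…,α_{r+1};β₁,…,β_r) ∈ 𝒰_r be such that no β_i + 1 is a non-positive integer. Let A, B ∈ ℂ with Re(B − A) > 0 and B not a non-positive integer. Then Σ_{k=0}^∞ (α₁)_k⋯(α_{r+1})_k (A)_k/((β₁+1)_k⋯(β_r+1)_k (B)_k · k!) = ((B−A)/B) · Σ_{k=0}^∞ (α₁+1)_k⋯(α_{r+1}+1)_k (A)_k/((β₁+1)_k⋯(β_r+1)_k (B+1)_k · k!). -/

import Mathlib

noncomputable def poch (a : ℂ) (k : ℕ) : ℂ := Polynomial.eval a (ascPochhammer ℂ k)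

noncomputable def esym {n : ℕ} (v : Fin n → ℂ) (l : ℕ) : ℂ :=
  ∑ t ∈ Finset.powersetCard l (Finset.univ : Finset (Fin n)), ∏ i ∈ t, v i

def inU (r : ℕ) (α : Fin (r+1) → ℂ) (β : Fin r → ℂ) : Prop :=
  ∀ l : ℕ, 1 ≤ l → l ≤ r → esym α l = esym β l

/-! Since `(α; β) ∈ 𝒰_r`, the polynomial `∏ (αᵢ + x) - x ∏ (βᵢ + x)` is the constant `∏ αᵢ`. This makes
the terms `c_k` of the left-hand series telescope against the terms `m_k` of the series with `α`
shifted to `α + 1` and `B` kept: `c_{k+1} = m_{k+1} - m_k (A + k) / (B + k)`. Summing,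
`∑_{k ≤ N} c_k = (B - A) / B * ∑_{k < N} d_k + m_N`, where `d_k` are the terms of the right-hand series.
By Gauss's limit formula for `Γ`, a ratio of two products of Pochhammer symbols grows like
`n ^ Re (∑ a - ∑ b)`; with `∑ α = ∑ β` and `Re (B - A) > 0` this makes both series converge and
`m_N → 0`. -/

open Finset Filter Asymptotics Topology
open scoped Nat

lemma poch_zero (a : ℂ) : poch a 0 = 1 := by simp [poch]

lemma poch_succ (a : ℂ) (k : ℕ) : poch a (k + 1) = poch a k * (a + k) :=
  ascPochhammer_succ_eval k a

lemma poch_succ' (a : ℂ) (k : ℕ) : poch a (k + 1) = a * poch (a + 1) k := by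
  simp [poch, ascPochhammer_succ_left, Polynomial.eval_comp]

lemma poch_one (k : ℕ) : poch 1 k = k ! := ascPochhammer_eval_one ℂ k

lemma poch_eq_prod_range (a : ℂ) (k : ℕ) : poch a k = ∏ j ∈ range k, (a + j) := by
  induction k with
  | zero => simp [poch_zero]
  | succ n ih => rw [poch_succ, ih, prod_range_succ]

lemma GammaSeq_eq_div_poch (s : ℂ) (n : ℕ) :
    Complex.GammaSeq s n = (n : ℂ) ^ s * n ! / poch s (n + 1) := by
  rw [Complex.GammaSeq, poch_eq_prod_range]

-- At the poles of `Γ` both `Γ` and the tail of `GammaSeq` are `0` by convention.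
lemma tendsto_inv_GammaSeq (s : ℂ) :
    Tendsto (fun n => (Complex.GammaSeq s n)⁻¹) atTop (𝓝 (Complex.Gamma s)⁻¹) := by
  by_cases hs : ∀ m : ℕ, s ≠ -m
  · exact (Complex.GammaSeq_tendsto_Gamma s).inv₀ (Complex.Gamma_ne_zero hs)
  push Not at hs
  obtain ⟨m, rfl⟩ := hs
  rw [Complex.Gamma_neg_nat_eq_zero, inv_zero]
  refine tendsto_const_nhds.congr' ?_
  filter_upwards [eventually_ge_atTop m] with n hn
  have : poch (-m) (n + 1) = 0 := by
    simp only [poch, ascPochhammer_eval_eq_zero_iff, neg_neg]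
    exact ⟨m, by omega, rfl⟩
  rw [GammaSeq_eq_div_poch, this, div_zero, inv_zero]

-- If `poch b (n + 1) = 0` then also `GammaSeq b n = 0`, so both sides vanish.
lemma poch_succ_div_poch_succ (a b : ℂ) {n : ℕ} (hn : n ≠ 0) :
    poch a (n + 1) / poch b (n + 1) =
      (Complex.GammaSeq a n)⁻¹ * Complex.GammaSeq b n * (n : ℂ) ^ (a - b) := by
  have hn' : (n : ℂ) ≠ 0 := Nat.cast_ne_zero.2 hn
  have hfac : (n ! : ℂ) ≠ 0 := Nat.cast_ne_zero.2 n.factorial_ne_zero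
  rw [GammaSeq_eq_div_poch, GammaSeq_eq_div_poch, Complex.cpow_sub _ _ hn']
  have ha : (n : ℂ) ^ a ≠ 0 := by simp [Complex.cpow_eq_zero_iff, hn']
  have hb : (n : ℂ) ^ b ≠ 0 := by simp [Complex.cpow_eq_zero_iff, hn']
  field_simp

lemma isBigO_poch_succ_div_poch_succ (a b : ℂ) :
    (fun n => poch a (n + 1) / poch b (n + 1)) =O[atTop] fun n : ℕ => (n : ℝ) ^ (a - b).re := by
  have hpow : (fun n : ℕ => (n : ℂ) ^ (a - b)) =O[atTop] fun n : ℕ => (n : ℝ) ^ (a - b).re := by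
    refine IsBigO.of_bound 1 ?_
    filter_upwards [eventually_ge_atTop 1] with n hn
    rw [Complex.norm_natCast_cpow_of_pos hn, Real.norm_of_nonneg (by positivity), one_mul]
  have h := ((tendsto_inv_GammaSeq a).isBigO_one ℝ).mul
    ((Complex.GammaSeq_tendsto_Gamma b).isBigO_one ℝ) |>.mul hpow
  simp only [one_mul] at h
  refine h.congr' ?_ EventuallyEq.rfl
  filter_upwards [eventually_ne_atTop 0] with n hn
  exact (poch_succ_div_poch_succ a b hn).symm

lemma isBigO_prod_poch_succ_div_prod_poch_succ {ι : Type*} [Fintype ι] (a b : ι → ℂ) :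
    (fun n => (∏ i, poch (a i) (n + 1)) / ∏ i, poch (b i) (n + 1)) =O[atTop]
      fun n : ℕ => (n : ℝ) ^ (∑ i, (a i - b i)).re := by
  have h := IsBigO.finsetProd (s := univ) fun i _ => isBigO_poch_succ_div_poch_succ (a i) (b i)
  refine h.congr' (Eventually.of_forall fun n => prod_div_distrib ..) ?_
  filter_upwards [eventually_ge_atTop 1] with n hn
  rw [Complex.re_sum, Real.rpow_sum_of_pos (by exact_mod_cast hn)]

lemma esym_zero {n : ℕ} (v : Fin n → ℂ) : esym v 0 = 1 := by simp [esym]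

lemma esym_one {n : ℕ} (v : Fin n → ℂ) : esym v 1 = ∑ i, v i := by simp [esym, powersetCard_one]

lemma esym_self {n : ℕ} (v : Fin n → ℂ) : esym v n = ∏ i, v i := by
  have h := powersetCard_self (univ : Finset (Fin n))
  rw [Finset.card_univ, Fintype.card_fin] at h
  simp [esym, h]

lemma prod_add_eq_sum_esym {n : ℕ} (v : Fin n → ℂ) (x : ℂ) :
    ∏ i, (v i + x) = ∑ l ∈ range (n + 1), esym v l * x ^ (n - l) := by
  rw [prod_add, sum_powerset, Finset.card_univ, Fintype.card_fin]
  refine sum_congr rfl fun l _ => ?_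
  rw [esym, sum_mul]
  refine sum_congr rfl fun t ht => ?_
  rw [prod_const, card_sdiff_of_subset (subset_univ t), (mem_powersetCard.1 ht).2]
  simp

namespace inU

variable {r : ℕ} {α : Fin (r + 1) → ℂ} {β : Fin r → ℂ}

theorem prod_add (hU : inU r α β) (x : ℂ) :
    ∏ i, (α i + x) = x * ∏ i, (β i + x) + ∏ i, α i := by
  rw [prod_add_eq_sum_esym α, prod_add_eq_sum_esym β, sum_range_succ (n := r + 1), mul_sum,
    esym_self, Nat.sub_self, pow_zero, mul_one]
  congr 1
  refine sum_congr rfl fun l hl => ?_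
  have hlr : l ≤ r := Nat.lt_succ_iff.1 (mem_range.1 hl)
  rw [show r + 1 - l = r - l + 1 by omega, pow_succ]
  rcases Nat.eq_zero_or_pos l with rfl | hl
  · rw [esym_zero, esym_zero]; ring
  · rw [hU l hl hlr]; ring

theorem sum_eq (hU : inU r α β) (hr : 1 ≤ r) : ∑ i, α i = ∑ i, β i := by
  simpa only [esym_one] using hU 1 le_rfl hr

end inU

section Thomae

variable {r : ℕ}

noncomputable def thomaeTerm (α : Fin (r + 1) → ℂ) (β : Fin r → ℂ) (A B : ℂ) (k : ℕ) : ℂ :=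
  ((∏ i, poch (α i) k) * poch A k) / ((∏ i, poch (β i + 1) k) * poch B k * (k ! : ℂ))

variable (α : Fin (r + 1) → ℂ) (β : Fin r → ℂ) (A B : ℂ)

lemma thomaeTerm_zero : thomaeTerm α β A B 0 = 1 := by simp [thomaeTerm, poch_zero]

lemma thomaeTerm_succ (k : ℕ) :
    thomaeTerm α β A B (k + 1) = thomaeTerm α β A B k *
      ((∏ i, (α i + k)) * (A + k) / ((∏ i, (β i + 1 + k)) * (B + k) * (k + 1))) := by
  simp only [thomaeTerm, poch_succ, prod_mul_distrib, Nat.factorial_succ]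
  push_cast
  rw [div_mul_div_comm]
  congr 1 <;> ring

lemma thomaeTerm_succ' (k : ℕ) :
    thomaeTerm α β A B (k + 1) = thomaeTerm (fun i => α i + 1) β A B k *
      ((∏ i, α i) * (A + k) / ((∏ i, (β i + 1 + k)) * (B + k) * (k + 1))) := by
  have hα : ∏ i, poch (α i) (k + 1) = (∏ i, α i) * ∏ i, poch (α i + 1) k := by
    rw [← prod_mul_distrib]
    exact prod_congr rfl fun i _ => poch_succ' _ _
  rw [thomaeTerm, hα]
  simp only [thomaeTerm, poch_succ, prod_mul_distrib, Nat.factorial_succ]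
  push_cast
  rw [div_mul_div_comm]
  congr 1 <;> ring

lemma thomaeTerm_add_one_right {B : ℂ} (hB : B ≠ 0) (k : ℕ) :
    thomaeTerm α β A (B + 1) k = thomaeTerm α β A B k * (B / (B + k)) := by
  have hpoch : poch B k * (B + k) = B * poch (B + 1) k := by rw [← poch_succ, poch_succ']
  rw [thomaeTerm, thomaeTerm, div_mul_div_comm, mul_comm _ B,
    show (∏ i, poch (β i + 1) k) * poch B k * (k ! : ℂ) * (B + k)
      = B * ((∏ i, poch (β i + 1) k) * poch (B + 1) k * (k ! : ℂ)) by
        linear_combination (∏ i, poch (β i + 1) k) * (k ! : ℂ) * hpoch,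
    mul_div_mul_left _ _ hB]

lemma thomaeTerm_eq_prod_div_prod (k : ℕ) :
    thomaeTerm α β A B k = (∏ i, poch ((Fin.cons A α : Fin (r + 2) → ℂ) i) k) /
      ∏ i, poch ((Fin.cons B (Fin.cons 1 fun i => β i + 1) : Fin (r + 2) → ℂ) i) k := by
  simp only [thomaeTerm, Fin.prod_univ_succ, Fin.cons_zero, Fin.cons_succ, poch_one]
  ring

lemma isBigO_thomaeTerm :
    (fun n => thomaeTerm α β A B (n + 1)) =O[atTop]
      fun n : ℕ => (n : ℝ) ^ ((∑ i, α i) + A - ∑ i, β i - B - r - 1).re := by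
  simp_rw [thomaeTerm_eq_prod_div_prod]
  convert isBigO_prod_poch_succ_div_prod_poch_succ _ _ using 5
  simp only [Fin.sum_univ_succ, Fin.cons_zero, Fin.cons_succ, sum_sub_distrib, sum_add_distrib,
    sum_const, card_univ, Fintype.card_fin, nsmul_eq_mul, mul_one]
  ring

lemma summable_thomaeTerm (h : ((∑ i, α i) + A - ∑ i, β i - B).re < r) :
    Summable (thomaeTerm α β A B) := by
  refine (summable_nat_add_iff 1).1 <| summable_of_isBigO_nat
    (Real.summable_nat_rpow.2 ?_) (isBigO_thomaeTerm α β A B)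
  simp only [Complex.sub_re, Complex.add_re, Complex.natCast_re, Complex.one_re] at h ⊢
  linarith

lemma tendsto_thomaeTerm_zero (h : ((∑ i, α i) + A - ∑ i, β i - B).re < r + 1) :
    Tendsto (thomaeTerm α β A B) atTop (𝓝 0) := by
  refine (tendsto_add_atTop_iff_nat 1).1 <| (isBigO_thomaeTerm α β A B).trans_tendsto ?_
  have hneg : 0 < -((∑ i, α i) + A - ∑ i, β i - B - r - 1).re := by
    simp only [Complex.sub_re, Complex.add_re, Complex.natCast_re, Complex.one_re] at h ⊢
    linarith
  have hpow := (tendsto_rpow_neg_atTop hneg).comp tendsto_natCast_atTop_atTop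
  rwa [neg_neg] at hpow

end Thomae

section Telescoping

variable {r : ℕ} (α : Fin (r + 1) → ℂ) (β : Fin r → ℂ) (A : ℂ) {B : ℂ}

lemma thomaeTerm_succ_eq_sub (hU : inU r α β) (hβ : ∀ i : Fin r, ∀ m : ℕ, β i + 1 ≠ -(m : ℂ))
    (hB : ∀ m : ℕ, B ≠ -(m : ℂ)) (k : ℕ) :
    thomaeTerm α β A B (k + 1) = thomaeTerm (fun i => α i + 1) β A B (k + 1) -
      thomaeTerm (fun i => α i + 1) β A B k * ((A + k) / (B + k)) := by
  have hkey : ∏ i, (α i + 1 + k) = (k + 1) * ∏ i, (β i + 1 + k) + ∏ i, α i := by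
    simp only [add_assoc]
    rw [add_comm (k : ℂ) 1]
    exact hU.prod_add _
  have hXb : ∏ i, (β i + 1 + k) ≠ 0 :=
    prod_ne_zero_iff.2 fun i _ h => hβ i k (by linear_combination h)
  have hBk : B + k ≠ 0 := fun h => hB k (by linear_combination h)
  have hk : (k : ℂ) + 1 ≠ 0 := Nat.cast_add_one_ne_zero k
  rw [thomaeTerm_succ', thomaeTerm_succ, hkey]
  field_simp
  ring

lemma sum_range_succ_thomaeTerm (hU : inU r α β) (hβ : ∀ i : Fin r, ∀ m : ℕ, β i + 1 ≠ -(m : ℂ))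
    (hB : ∀ m : ℕ, B ≠ -(m : ℂ)) (N : ℕ) :
    ∑ k ∈ range (N + 1), thomaeTerm α β A B k =
      (B - A) / B * ∑ k ∈ range N, thomaeTerm (fun i => α i + 1) β A (B + 1) k +
        thomaeTerm (fun i => α i + 1) β A B N := by
  have hB0 : B ≠ 0 := by simpa using hB 0
  induction N with
  | zero => simp [thomaeTerm_zero]
  | succ N ih =>
    have hBN : B + N ≠ 0 := fun h => hB N (by linear_combination h)
    rw [sum_range_succ, ih, sum_range_succ, thomaeTerm_succ_eq_sub α β A hU hβ hB,
      thomaeTerm_add_one_right _ _ _ hB0]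
    field_simp
    ring

end Telescoping

theorem tsum_eq_mul_tsum_of_sum_range_succ {R : Type*} [Ring R] [TopologicalSpace R]
    [IsTopologicalRing R] [T2Space R] {c d m : ℕ → R} {t : R} (hc : Summable c)
    (hd : Summable d) (hm : Tendsto m atTop (𝓝 0))
    (h : ∀ N, ∑ k ∈ range (N + 1), c k = t * ∑ k ∈ range N, d k + m N) :
    ∑' k, c k = t * ∑' k, d k := by
  have hlim := (hd.hasSum.tendsto_sum_nat.const_mul t).add hm
  rw [add_zero] at hlim
  exact tendsto_nhds_unique
    ((hc.hasSum.tendsto_sum_nat.comp (tendsto_add_atTop_nat 1)).congr h) hlim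

/-- The beta-integral consequence of the generalized Euler transformation
(Theorem thm:genThomae). -/
theorem generalized_thomae
    (r : ℕ) (hr : 1 ≤ r) (α : Fin (r+1) → ℂ) (β : Fin r → ℂ)
    (hU : inU r α β)
    (hβ : ∀ i : Fin r, ∀ m : ℕ, β i + 1 ≠ -(m : ℂ))
    (A B : ℂ) (hAB : 0 < (B - A).re) (hB : ∀ m : ℕ, B ≠ -(m : ℂ)) :
    ∑' k : ℕ, ((∏ i, poch (α i) k) * poch A k) /
        ((∏ i, poch (β i + 1) k) * poch B k * (k.factorial : ℂ))
      = ((B - A) / B) *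
        ∑' k : ℕ, ((∏ i, poch (α i + 1) k) * poch A k) /
          ((∏ i, poch (β i + 1) k) * poch (B + 1) k * (k.factorial : ℂ)) := by
  have hsum := hU.sum_eq hr
  have hshift : ∑ i, (α i + 1) = ∑ i, α i + (r + 1) := by simp [sum_add_distrib]
  have hAB' : (A - B).re < 0 := by rw [← neg_sub, Complex.neg_re]; linarith
  have hr0 : (0 : ℝ) ≤ r := r.cast_nonneg
  refine tsum_eq_mul_tsum_of_sum_range_succ ?_ ?_ ?_ (sum_range_succ_thomaeTerm α β A hU hβ hB)
  · refine summable_thomaeTerm α β A B ?_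
    rw [show ∑ i, α i + A - ∑ i, β i - B = A - B by rw [hsum]; ring]
    linarith
  · refine summable_thomaeTerm _ β A (B + 1) ?_
    rw [show ∑ i, (α i + 1) + A - ∑ i, β i - (B + 1) = A - B + r by rw [hshift, hsum]; ring,
      Complex.add_re, Complex.natCast_re]
    linarith
  · refine tendsto_thomaeTerm_zero _ β A B ?_
    rw [show ∑ i, (α i + 1) + A - ∑ i, β i - B = A - B + (r + 1) by rw [hshift, hsum]; ring,
      Complex.add_re, Complex.add_re, Complex.natCast_re, Complex.one_re]
    linarith
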